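/- Let A ⊆ Φ⁺ be a finite set that is biclosed (both A and Φ⁺ \ A are closed). Then there exists w ∈ W with A = N(w). -/

import Mathlib

open Pointwise

noncomputable section

/-- The set of nonnegative linear combinations of elements of `X`. -/
def coneOf {V : Type*} [AddCommGroup V] [Module ℝ V] (X : Set V) : Set V :=
  {v | ∃ (n : ℕ) (c : Fin n → ℝ) (f : Fin n → V),
    (∀ i, 0 ≤ c i) ∧ (∀ i, f i ∈ X) ∧ ∑ i, c i • f i = v}

/-- A geometric representation of the Coxeter system `cs` on the real quadratic
space `(V, bil)`: each simple generator acts as the `bil`-reflection in its simple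
root, and the simple roots form a simple system. -/
structure GeomRep {B : Type*} [Fintype B] {W : Type*} [Group W]
    (M : CoxeterMatrix B) (cs : CoxeterSystem M W)
    (V : Type*) [AddCommGroup V] [Module ℝ V] where
  /-- the symmetric bilinear form -/
  bil : LinearMap.BilinForm ℝ V
  bil_symm : ∀ u v : V, bil u v = bil v u
  /-- the representation of `W` by linear automorphisms of `V` -/
  π : W →* (V ≃ₗ[ℝ] V)
  /-- the simple roots -/
  α : B → V
  norm_one : ∀ i, bil (α i) (α i) = 1
  simple_refl : ∀ i v, π (cs.simple i) v = v - (2 * bil (α i) v) • α i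
  pos_indep : ∀ c : B → ℝ, (∀ i, 0 ≤ c i) → ∑ i, c i • α i = 0 → ∀ i, c i = 0
  angle_finite : ∀ i j, i ≠ j → M.M i j ≠ 0 →
    bil (α i) (α j) = - Real.cos (Real.pi / (M.M i j : ℝ))
  angle_infinite : ∀ i j, i ≠ j → M.M i j = 0 → bil (α i) (α j) ≤ -1

namespace GeomRep

variable {B : Type*} [Fintype B] {W : Type*} [Group W]
  {M : CoxeterMatrix B} {cs : CoxeterSystem M W}
  {V : Type*} [AddCommGroup V] [Module ℝ V]

/-- The root system `Φ = W(Δ)`. -/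
def Phi (G : GeomRep M cs V) : Set V := {v | ∃ (w : W) (i : B), G.π w (G.α i) = v}

/-- The positive roots `Φ⁺ = cone(Δ) ∩ Φ`. -/
def PhiPos (G : GeomRep M cs V) : Set V := G.Phi ∩ coneOf (Set.range G.α)

/-- The (left) inversion set `N(w) = Φ⁺ ∩ w(Φ⁻)`. -/
def N (G : GeomRep M cs V) (w : W) : Set V := G.PhiPos ∩ (G.π w '' (-G.PhiPos))

/-- `A ⊆ Φ⁺` is closed if for all `α, β ∈ A`, every root in `cone(α,β)` lies in `A`. -/
def IsClosedSet (G : GeomRep M cs V) (A : Set V) : Prop :=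
  ∀ a ∈ A, ∀ b ∈ A, coneOf {a, b} ∩ G.Phi ⊆ A

/-- `A` is biclosed if `A` and `Φ⁺ \ A` are both closed. -/
def IsBiclosed (G : GeomRep M cs V) (A : Set V) : Prop :=
  G.IsClosedSet A ∧ G.IsClosedSet (G.PhiPos \ A)

/-- `A` is convex if `A = cone(A) ∩ Φ`. -/
def IsConvexSet (G : GeomRep M cs V) (A : Set V) : Prop :=
  A = coneOf A ∩ G.Phi

/-- `A` is biconvex if `A` and `Φ⁺ \ A` are both convex. -/
def IsBiconvex (G : GeomRep M cs V) (A : Set V) : Prop :=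
  G.IsConvexSet A ∧ G.IsConvexSet (G.PhiPos \ A)

/-- `A ⊆ Φ⁺` is separable if `cone(A) ∩ cone(Φ⁺ \ A) = {0}`. -/
def IsSeparable (G : GeomRep M cs V) (A : Set V) : Prop :=
  coneOf A ∩ coneOf (G.PhiPos \ A) = {0}

end GeomRep

/-- The right weak order on a Coxeter group. -/
def WeakLE {B : Type*} {W : Type*} [Group W] {M : CoxeterMatrix B}
    (cs : CoxeterSystem M W) (u w : W) : Prop :=
  cs.length u + cs.length (u⁻¹ * w) = cs.length w

/-!
Induction on `|A|`. Some simple root lies in `A`: take `β ∈ A` minimal for the order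
`u ≤ v ⟺ v - u ∈ cone(Δ)` and `k` with `B(αₖ, β) > 0`; if `β ≠ αₖ ∉ A`, then
`sₖ β = β - 2B(αₖ, β) αₖ` is a smaller positive root, which lies in `A` because `Φ⁺ \ A` is
closed. For `αᵢ ∈ A`, the set `sᵢ(A \ {αᵢ})` is again finite and biclosed, hence equal to some
`N(u)`, and then `A = {αᵢ} ∪ sᵢ N(u) = N(sᵢ u)`.

All of this rests on Tits' theorem that every root is positive or negative, and its corollary
that `sᵢ` permutes `Φ⁺ \ {αᵢ}`. The simple roots are only positively independent, so positivity
is measured by `cone(Δ)`, whose salience replaces the usual height arguments. In rank two the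
coefficients of `⋯ sᵢ sⱼ αᵢ` are Chebyshev values `Uₖ(cos(π/m)) = sin((k+1)π/m) / sin(π/m) ≥ 0`.
-/

section Cone

variable {V V' : Type*} [AddCommGroup V] [Module ℝ V] [AddCommGroup V'] [Module ℝ V']

theorem coneOf_subset {C X : Set V} (h0 : (0 : V) ∈ C) (hadd : ∀ x ∈ C, ∀ y ∈ C, x + y ∈ C)
    (hsmul : ∀ x ∈ X, ∀ t : ℝ, 0 ≤ t → t • x ∈ C) : coneOf X ⊆ C := by
  rintro v ⟨n, c, f, hc, hf, rfl⟩
  induction n with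
  | zero => simpa using h0
  | succ n ih =>
    rw [Fin.sum_univ_castSucc]
    exact hadd _ (ih _ _ (fun _ => hc _) (fun _ => hf _)) _ (hsmul _ (hf _) _ (hc _))

theorem mem_coneOf_pair {a b v : V} :
    v ∈ coneOf ({a, b} : Set V) ↔ ∃ c d : ℝ, 0 ≤ c ∧ 0 ≤ d ∧ v = c • a + d • b := by
  constructor
  · refine fun hv => coneOf_subset (C := {v | ∃ c d : ℝ, 0 ≤ c ∧ 0 ≤ d ∧ v = c • a + d • b})
      ⟨0, 0, le_rfl, le_rfl, by simp⟩ ?_ ?_ hv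
    · rintro _ ⟨c₁, d₁, hc₁, hd₁, rfl⟩ _ ⟨c₂, d₂, hc₂, hd₂, rfl⟩
      exact ⟨c₁ + c₂, d₁ + d₂, by positivity, by positivity, by module⟩
    · rintro x (rfl | rfl) t ht
      · exact ⟨t, 0, ht, le_rfl, by simp⟩
      · exact ⟨0, t, le_rfl, ht, by simp⟩
  · rintro ⟨c, d, hc, hd, rfl⟩
    exact ⟨2, ![c, d], ![a, b], by simp [Fin.forall_fin_two, hc, hd],
      by simp [Fin.forall_fin_two], by simp [Fin.sum_univ_two]⟩

theorem map_mem_coneOf {F : Type*} [FunLike F V V'] [LinearMapClass F ℝ V V'] (f : F)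
    {X : Set V} {v : V} (hv : v ∈ coneOf X) : f v ∈ coneOf (f '' X) := by
  obtain ⟨n, c, g, hc, hg, rfl⟩ := hv
  exact ⟨n, c, f ∘ g, hc, fun i => Set.mem_image_of_mem f (hg i), by simp [map_sum, map_smul]⟩

end Cone

namespace GeomRep

variable {B : Type*} [Fintype B] {W : Type*} [Group W]
  {M : CoxeterMatrix B} {cs : CoxeterSystem M W}
  {V : Type*} [AddCommGroup V] [Module ℝ V] (G : GeomRep M cs V)

/-- `cone(Δ)`, with the coefficients indexed by `B`. -/
def posCone : Set V := {v | ∃ c : B → ℝ, (∀ b, 0 ≤ c b) ∧ ∑ b, c b • G.α b = v}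

theorem zero_mem_posCone : (0 : V) ∈ G.posCone := ⟨0, fun _ => le_rfl, by simp⟩

theorem add_mem_posCone {x y : V} (hx : x ∈ G.posCone) (hy : y ∈ G.posCone) :
    x + y ∈ G.posCone := by
  obtain ⟨c, hc, rfl⟩ := hx
  obtain ⟨d, hd, rfl⟩ := hy
  exact ⟨c + d, fun b => add_nonneg (hc b) (hd b), by simp [add_smul, Finset.sum_add_distrib]⟩

theorem smul_mem_posCone {t : ℝ} (ht : 0 ≤ t) {x : V} (hx : x ∈ G.posCone) :
    t • x ∈ G.posCone := by
  obtain ⟨c, hc, rfl⟩ := hx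
  exact ⟨t • c, fun b => mul_nonneg ht (hc b), by simp [Finset.smul_sum, smul_smul]⟩

theorem alpha_mem_posCone (i : B) : G.α i ∈ G.posCone := by
  classical
  exact ⟨Pi.single i 1, fun b => by by_cases h : b = i <;> simp [h], by simp [Pi.single_apply]⟩

theorem coneOf_range_alpha : coneOf (Set.range G.α) = G.posCone := by
  refine subset_antisymm
    (coneOf_subset G.zero_mem_posCone (fun _ hx _ hy => G.add_mem_posCone hx hy) ?_) ?_
  · rintro _ ⟨i, rfl⟩ t ht
    exact G.smul_mem_posCone ht (G.alpha_mem_posCone i)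
  · rintro v ⟨c, hc, rfl⟩
    let e := Fintype.equivFin B
    exact ⟨Fintype.card B, c ∘ e.symm, G.α ∘ e.symm, fun _ => hc _, fun _ => ⟨_, rfl⟩,
      Fintype.sum_equiv e.symm _ _ fun _ => rfl⟩

theorem mem_phiPos_iff {v : V} : v ∈ G.PhiPos ↔ v ∈ G.Phi ∧ v ∈ G.posCone := by
  rw [PhiPos, coneOf_range_alpha]
  rfl

theorem eq_zero_of_mem_posCone_of_neg_mem {v : V} (hv : v ∈ G.posCone) (hnv : -v ∈ G.posCone) :
    v = 0 := by
  obtain ⟨c, hc, rfl⟩ := hv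
  obtain ⟨d, hd, hsum⟩ := hnv
  have hcd := G.pos_indep (c + d) (fun b => add_nonneg (hc b) (hd b))
    (by simp [add_smul, Finset.sum_add_distrib, hsum])
  have hc0 : ∀ b, c b = 0 := fun b => by linarith [hcd b, hc b, hd b, Pi.add_apply c d b]
  simp [hc0]

theorem π_mul_apply (u w : W) (v : V) : G.π (u * w) v = G.π u (G.π w v) := by
  rw [map_mul]; rfl

theorem π_one_apply (v : V) : G.π 1 v = v := by
  rw [map_one]; rfl

theorem π_simple_alpha (i : B) : G.π (cs.simple i) (G.α i) = -G.α i := by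
  rw [G.simple_refl, G.norm_one]
  module

theorem π_simple_π_simple (i : B) (v : V) : G.π (cs.simple i) (G.π (cs.simple i) v) = v := by
  rw [← G.π_mul_apply, cs.simple_mul_simple_self, G.π_one_apply]

theorem π_inv_π (w : W) (v : V) : G.π w⁻¹ (G.π w v) = v := by
  rw [← G.π_mul_apply, inv_mul_cancel, G.π_one_apply]

theorem π_π_inv (w : W) (v : V) : G.π w (G.π w⁻¹ v) = v := by
  rw [← G.π_mul_apply, mul_inv_cancel, G.π_one_apply]

theorem bil_π_simple_π_simple (i : B) (u v : V) :
    G.bil (G.π (cs.simple i) u) (G.π (cs.simple i) v) = G.bil u v := by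
  rw [G.simple_refl, G.simple_refl]
  simp only [map_sub, map_smul, LinearMap.sub_apply, LinearMap.smul_apply, smul_eq_mul,
    G.norm_one, G.bil_symm u (G.α i)]
  ring

theorem bil_π_π (w : W) (u v : V) : G.bil (G.π w u) (G.π w v) = G.bil u v := by
  induction w using cs.simple_induction_left generalizing u v with
  | one => rw [G.π_one_apply, G.π_one_apply]
  | mul_simple_left w i ih =>
    rw [G.π_mul_apply, G.π_mul_apply, G.bil_π_simple_π_simple, ih]

theorem alpha_mem_phi (i : B) : G.α i ∈ G.Phi := ⟨1, i, G.π_one_apply _⟩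

theorem π_mem_phi {v : V} (hv : v ∈ G.Phi) (w : W) : G.π w v ∈ G.Phi := by
  obtain ⟨u, i, rfl⟩ := hv
  exact ⟨w * u, i, G.π_mul_apply w u _⟩

theorem neg_mem_phi {v : V} (hv : v ∈ G.Phi) : -v ∈ G.Phi := by
  obtain ⟨u, i, rfl⟩ := hv
  exact ⟨u * cs.simple i, i, by rw [G.π_mul_apply, G.π_simple_alpha, map_neg]⟩

theorem bil_self_of_mem_phi {v : V} (hv : v ∈ G.Phi) : G.bil v v = 1 := by
  obtain ⟨u, i, rfl⟩ := hv
  rw [G.bil_π_π, G.norm_one]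

theorem ne_zero_of_mem_phi {v : V} (hv : v ∈ G.Phi) : v ≠ 0 := by
  rintro rfl
  simpa using G.bil_self_of_mem_phi hv

theorem eq_alpha_of_smul_mem_phi {i : B} {t : ℝ} (ht : 0 ≤ t) (h : t • G.α i ∈ G.Phi) :
    t • G.α i = G.α i := by
  have h1 := G.bil_self_of_mem_phi h
  simp only [map_smul, LinearMap.smul_apply, smul_eq_mul, G.norm_one] at h1
  rw [show t = 1 by nlinarith, one_smul]

theorem alpha_mem_phiPos (i : B) : G.α i ∈ G.PhiPos :=
  G.mem_phiPos_iff.2 ⟨G.alpha_mem_phi i, G.alpha_mem_posCone i⟩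

theorem neg_notMem_phiPos {v : V} (hv : v ∈ G.PhiPos) : -v ∉ G.PhiPos := fun hnv =>
  G.ne_zero_of_mem_phi (G.mem_phiPos_iff.1 hv).1
    (G.eq_zero_of_mem_posCone_of_neg_mem (G.mem_phiPos_iff.1 hv).2 (G.mem_phiPos_iff.1 hnv).2)

theorem bil_alpha_alpha_nonpos {i j : B} (hij : i ≠ j) : G.bil (G.α i) (G.α j) ≤ 0 := by
  by_cases hM : M.M i j = 0
  · linarith [G.angle_infinite i j hij hM]
  · have h2 : (2 : ℝ) ≤ M.M i j := by exact_mod_cast (by have := M.off_diagonal i j hij; omega)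
    have h0 : 0 ≤ Real.pi / M.M i j := by positivity
    rw [G.angle_finite i j hij hM, neg_nonpos]
    exact Real.cos_nonneg_of_mem_Icc ⟨by linarith [Real.pi_pos],
      div_le_div_of_nonneg_left Real.pi_pos.le two_pos h2⟩

end GeomRep

namespace Polynomial.Chebyshev

theorem U_eval_nonneg_of_one_le {x : ℝ} (hx : 1 ≤ x) {n : ℤ} (hn : -1 ≤ n) :
    0 ≤ (U ℝ n).eval x := by
  have key : ∀ k : ℕ, 0 ≤ (U ℝ (k - 1)).eval x ∧ (U ℝ (k - 1)).eval x ≤ (U ℝ k).eval x := by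
    intro k
    induction k with
    | zero => simp
    | succ k ih =>
      have h := U_add_one ℝ (k : ℤ)
      push_cast
      simp only [add_sub_cancel_right, h, eval_sub, eval_mul, eval_ofNat, eval_X]
      constructor <;> nlinarith [ih.1, ih.2]
  obtain ⟨k, rfl⟩ : ∃ k : ℕ, n = k - 1 := ⟨(n + 1).toNat, by omega⟩
  exact (key k).1

theorem U_eval_cos_pi_div_nonneg {m : ℕ} (hm : 2 ≤ m) {n : ℤ} (h₀ : -1 ≤ n) (h₁ : n + 1 ≤ m) :
    0 ≤ (U ℝ n).eval (Real.cos (Real.pi / m)) := by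
  have hm' : (2 : ℝ) ≤ m := by exact_mod_cast hm
  have hsin : 0 < Real.sin (Real.pi / m) :=
    Real.sin_pos_of_pos_of_lt_pi (by positivity) (div_lt_self Real.pi_pos (by linarith))
  have hnm : ((n : ℝ) + 1) / m ≤ 1 := by
    rw [div_le_one (by positivity)]; exact_mod_cast h₁
  have hsin' : 0 ≤ Real.sin ((n + 1) * (Real.pi / m)) := by
    apply Real.sin_nonneg_of_nonneg_of_le_pi
    · have : (0 : ℝ) ≤ n + 1 := by exact_mod_cast (by omega : (0 : ℤ) ≤ n + 1)
      positivity
    · calc ((n : ℝ) + 1) * (Real.pi / m) = (n + 1) / m * Real.pi := by ring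
        _ ≤ 1 * Real.pi := by gcongr
        _ = Real.pi := one_mul _
  rw [← U_real_cos] at hsin'
  exact nonneg_of_mul_nonneg_left hsin' hsin

end Polynomial.Chebyshev

namespace CoxeterSystem

variable {B W : Type*} [Group W] {M : CoxeterMatrix B} (cs : CoxeterSystem M W)

theorem exists_simple_mul_wordProd_alternatingWord {i j l : B} (hl : l = i ∨ l = j) (m : ℕ) :
    ∃ m' ≤ m + 1,
      cs.simple l * cs.wordProd (alternatingWord i j m) = cs.wordProd (alternatingWord i j m') ∨
      cs.simple l * cs.wordProd (alternatingWord i j m) = cs.wordProd (alternatingWord j i m') := by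
  by_cases hp : l = if Even m then j else i
  · exact ⟨m + 1, le_rfl, Or.inl (by rw [alternatingWord_succ', cs.wordProd_cons, hp])⟩
  cases m with
  | zero => exact ⟨1, le_rfl, Or.inr (by simp_all [alternatingWord])⟩
  | succ m =>
    refine ⟨m, by omega, Or.inl ?_⟩
    have hq : l = if Even m then j else i := by
      rcases hl with rfl | rfl <;> split_ifs at hp ⊢ <;> simp_all [Nat.even_add_one]
    rw [alternatingWord_succ', ← hq, cs.wordProd_cons, cs.simple_mul_simple_cancel_left]

theorem exists_wordProd_eq_alternatingWord {i j : B} {ω : List B}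
    (hω : ∀ l ∈ ω, l = i ∨ l = j) :
    ∃ m ≤ ω.length, cs.wordProd ω = cs.wordProd (alternatingWord i j m) ∨
      cs.wordProd ω = cs.wordProd (alternatingWord j i m) := by
  induction ω with
  | nil => exact ⟨0, le_rfl, Or.inl rfl⟩
  | cons l ω ih =>
    have hl := hω l List.mem_cons_self
    obtain ⟨m, hm, h | h⟩ := ih fun l' hl' => hω l' (List.mem_cons_of_mem l hl')
    · obtain ⟨m', hm', h'⟩ := cs.exists_simple_mul_wordProd_alternatingWord hl m
      exact ⟨m', by simp only [List.length_cons]; omega, by rwa [cs.wordProd_cons, h]⟩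
    · obtain ⟨m', hm', h'⟩ := cs.exists_simple_mul_wordProd_alternatingWord hl.symm m
      exact ⟨m', by simp only [List.length_cons]; omega, by rw [cs.wordProd_cons, h]; exact h'.symm⟩

theorem exists_mul_wordProd_not_isRightDescent (i j : B) (v₀ : W) (ω₀ : List B)
    (hω₀ : ∀ l ∈ ω₀, l = i ∨ l = j) :
    ∃ (v : W) (ω : List B), (∀ l ∈ ω, l = i ∨ l = j) ∧
      v * cs.wordProd ω = v₀ * cs.wordProd ω₀ ∧
      cs.length v + ω.length = cs.length v₀ + ω₀.length ∧
      ¬cs.IsRightDescent v i ∧ ¬cs.IsRightDescent v j := by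
  by_cases h : ∃ l, (l = i ∨ l = j) ∧ cs.IsRightDescent v₀ l
  · obtain ⟨l, hl, hdesc⟩ := h
    obtain ⟨v, ω, hω, hprod, hlen, hvi, hvj⟩ :=
      exists_mul_wordProd_not_isRightDescent i j (v₀ * cs.simple l) (l :: ω₀)
        (by simpa [hl] using hω₀)
    have hl₀ := cs.isRightDescent_iff.1 hdesc
    refine ⟨v, ω, hω, ?_, ?_, hvi, hvj⟩
    · rw [hprod, cs.wordProd_cons, ← mul_assoc, cs.simple_mul_simple_cancel_right]
    · simp only [List.length_cons] at hlen
      omega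
  · push Not at h
    exact ⟨v₀, ω₀, hω₀, rfl, rfl, h i (Or.inl rfl), h j (Or.inr rfl)⟩
termination_by cs.length v₀
decreasing_by exact hdesc

end CoxeterSystem

namespace GeomRep

open CoxeterSystem Polynomial Polynomial.Chebyshev

variable {B : Type*} [Fintype B] {W : Type*} [Group W]
  {M : CoxeterMatrix B} {cs : CoxeterSystem M W}
  {V : Type*} [AddCommGroup V] [Module ℝ V] (G : GeomRep M cs V)

theorem π_simple_pair_left (i j : B) (a b : ℝ) :
    G.π (cs.simple i) (a • G.α i + b • G.α j)
      = (2 * -G.bil (G.α i) (G.α j) * b - a) • G.α i + b • G.α j := by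
  rw [G.simple_refl]
  simp only [map_add, map_smul, smul_eq_mul, G.norm_one]
  module

theorem π_simple_pair_right (i j : B) (a b : ℝ) :
    G.π (cs.simple j) (a • G.α i + b • G.α j)
      = a • G.α i + (2 * -G.bil (G.α i) (G.α j) * a - b) • G.α j := by
  rw [G.simple_refl]
  simp only [map_add, map_smul, smul_eq_mul, G.norm_one, G.bil_symm (G.α j) (G.α i)]
  module

theorem π_alternatingWord_alpha (i j : B) (m : ℕ) :
    G.π (cs.wordProd (alternatingWord i j m)) (G.α i)
      = (if Even m then (U ℝ m).eval (-G.bil (G.α i) (G.α j))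
          else (U ℝ (m - 1)).eval (-G.bil (G.α i) (G.α j))) • G.α i
        + (if Even m then (U ℝ (m - 1)).eval (-G.bil (G.α i) (G.α j))
          else (U ℝ m).eval (-G.bil (G.α i) (G.α j))) • G.α j := by
  induction m with
  | zero => simp [alternatingWord]
  | succ m ih =>
    rw [alternatingWord_succ', cs.wordProd_cons, G.π_mul_apply, ih]
    have hU := U_add_one ℝ (m : ℤ)
    rcases Nat.even_or_odd m with hm | hm
    · simp only [hm, if_true, Nat.even_add_one, not_true, if_false, G.π_simple_pair_right]
      push_cast
      simp [hU]
    · simp only [Nat.not_even_iff_odd.2 hm, Nat.even_add_one, not_false_eq_true, if_true,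
        if_false, G.π_simple_pair_left]
      push_cast
      simp [hU]

theorem U_eval_neg_bil_nonneg {i j : B} (hij : i ≠ j) {k : ℤ} (h₀ : -1 ≤ k)
    (h₁ : M.M i j = 0 ∨ k + 1 ≤ M.M i j) : 0 ≤ (U ℝ k).eval (-G.bil (G.α i) (G.α j)) := by
  by_cases hM : M.M i j = 0
  · exact U_eval_nonneg_of_one_le (by linarith [G.angle_infinite i j hij hM]) h₀
  · rw [G.angle_finite i j hij hM, neg_neg]
    exact U_eval_cos_pi_div_nonneg (by have := M.off_diagonal i j hij; omega) h₀
      (h₁.resolve_left hM)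

/-- The rank-two case of Tits' positivity theorem. -/
theorem exists_nonneg_π_wordProd_alpha {i j : B} (hij : i ≠ j) {ω : List B}
    (hω : ∀ l ∈ ω, l = i ∨ l = j)
    (hlen : cs.length (cs.wordProd ω * cs.simple i) = ω.length + 1) :
    ∃ a b : ℝ, 0 ≤ a ∧ 0 ≤ b ∧ G.π (cs.wordProd ω) (G.α i) = a • G.α i + b • G.α j := by
  obtain ⟨m, hm, h | h⟩ := cs.exists_wordProd_eq_alternatingWord hω
  · have hlen' : cs.IsReduced (alternatingWord j i (m + 1)) := by
      have h₁ := cs.length_wordProd_le (alternatingWord j i (m + 1))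
      rw [length_alternatingWord, alternatingWord_succ, cs.wordProd_concat, ← h, hlen] at h₁
      rw [CoxeterSystem.IsReduced, length_alternatingWord, alternatingWord_succ,
        cs.wordProd_concat, ← h, hlen]
      omega
    have hM : M.M i j = 0 ∨ (m : ℤ) + 1 ≤ M.M i j := by
      rw [M.symmetric i j]
      by_cases hM : M.M j i = 0
      · exact Or.inl hM
      · exact Or.inr (by exact_mod_cast not_lt.1 fun hlt =>
          cs.not_isReduced_alternatingWord j i hM hlt hlen')
    have hU : ∀ k : ℤ, k = m - 1 ∨ k = m → 0 ≤ (U ℝ k).eval (-G.bil (G.α i) (G.α j)) := by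
      rintro k (rfl | rfl) <;> apply G.U_eval_neg_bil_nonneg hij <;> omega
    rw [h, G.π_alternatingWord_alpha]
    refine ⟨_, _, ?_, ?_, rfl⟩ <;> split <;> exact hU _ (by simp)
  · cases m with
    | zero => exact ⟨1, 0, zero_le_one, le_rfl, by simp [h, alternatingWord]⟩
    | succ m =>
      rw [h, alternatingWord_succ, cs.wordProd_concat, cs.simple_mul_simple_cancel_right] at hlen
      have := cs.length_wordProd_le (alternatingWord i j m)
      simp only [length_alternatingWord] at this
      omega

/-- Tits, following Humphreys (§5.4): write `w = v u` with `u` in the parabolic subgroup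
`⟨sᵢ, sⱼ⟩` for a descent `sⱼ` of `w`, `v` without descents in `{sᵢ, sⱼ}` and lengths adding up;
then `v αᵢ, v αⱼ > 0` by induction and `u αᵢ ∈ cone(αᵢ, αⱼ)` by the rank-two case. -/
theorem π_alpha_mem_posCone {w : W} {i : B}
    (h : cs.length (w * cs.simple i) = cs.length w + 1) : G.π w (G.α i) ∈ G.posCone := by
  induction hn : cs.length w using Nat.strong_induction_on generalizing w i with
  | _ n ih =>
  by_cases hw : w = 1
  · rw [hw, G.π_one_apply]
    exact G.alpha_mem_posCone i
  obtain ⟨j, hj⟩ := cs.exists_rightDescent_of_ne_one hw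
  have hij : i ≠ j := by
    rintro rfl
    exact absurd h (by unfold IsRightDescent at hj; omega)
  obtain ⟨v, ω, hω, hvw, hlen, hvi, hvj⟩ :=
    exists_mul_wordProd_not_isRightDescent cs i j w [] (by simp)
  rw [cs.wordProd_nil, mul_one] at hvw
  simp only [List.length_nil, add_zero] at hlen
  have hω₀ : ω ≠ [] := by
    rintro rfl
    rw [cs.wordProd_nil, mul_one] at hvw
    exact hvj (hvw ▸ hj)
  have hv : cs.length v < n := by
    have := List.length_pos_iff.2 hω₀
    omega
  have hu : cs.length (cs.wordProd ω * cs.simple i) = ω.length + 1 := by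
    have h₁ := cs.length_mul_le v (cs.wordProd ω * cs.simple i)
    have h₂ := cs.length_wordProd_le (ω.concat i)
    rw [← mul_assoc, hvw, h] at h₁
    rw [cs.wordProd_concat, List.length_concat] at h₂
    omega
  obtain ⟨a, b, ha, hb, hab⟩ := G.exists_nonneg_π_wordProd_alpha hij hω hu
  rw [← hvw, G.π_mul_apply, hab, map_add, map_smul, map_smul]
  exact G.add_mem_posCone
    (G.smul_mem_posCone ha (ih _ hv (cs.not_isRightDescent_iff.1 hvi) rfl))
    (G.smul_mem_posCone hb (ih _ hv (cs.not_isRightDescent_iff.1 hvj) rfl))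

theorem mem_phiPos_or_neg_mem_phiPos {v : V} (hv : v ∈ G.Phi) : v ∈ G.PhiPos ∨ -v ∈ G.PhiPos := by
  obtain ⟨w, i, rfl⟩ := hv
  rcases cs.length_mul_simple w i with h | h
  · exact Or.inl (G.mem_phiPos_iff.2 ⟨⟨w, i, rfl⟩, G.π_alpha_mem_posCone h⟩)
  · have h' : cs.length (w * cs.simple i * cs.simple i) = cs.length (w * cs.simple i) + 1 := by
      rw [cs.simple_mul_simple_cancel_right]; omega
    have hneg : -G.π w (G.α i) = G.π (w * cs.simple i) (G.α i) := by
      rw [G.π_mul_apply, G.π_simple_alpha, map_neg]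
    rw [hneg]
    exact Or.inr (G.mem_phiPos_iff.2 ⟨⟨_, i, rfl⟩, G.π_alpha_mem_posCone h'⟩)

theorem coeff_eq_zero_of_sum_eq_smul_alpha {e : B → ℝ} (he : ∀ k, 0 ≤ e k) {i : B} {t : ℝ}
    (hsum : ∑ k, e k • G.α k = t • G.α i) {k : B} (hk : k ≠ i) : e k = 0 := by
  classical
  rcases le_or_gt t (e i) with hti | hti
  · have h := G.pos_indep (e - Pi.single i t)
      (fun k => by by_cases h : k = i <;> simp [h, he k, hti])
      (by simp [sub_smul, Finset.sum_sub_distrib, hsum, Pi.single_apply])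
    simpa [hk] using h k
  · -- pairing with `αᵢ`, the terms `k ≠ i` contribute `≤ 0`, yet they must add up to `t - e i > 0`
    have h := congrArg (G.bil (G.α i)) hsum
    rw [← Finset.add_sum_erase _ _ (Finset.mem_univ i)] at h
    simp only [map_add, map_sum, map_smul, smul_eq_mul, G.norm_one] at h
    have hle : ∑ k ∈ Finset.univ.erase i, e k * G.bil (G.α i) (G.α k) ≤ 0 :=
      Finset.sum_nonpos fun k hk => mul_nonpos_of_nonneg_of_nonpos (he k)
        (G.bil_alpha_alpha_nonpos (Finset.ne_of_mem_erase hk).symm)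
    linarith

theorem π_simple_mem_phiPos {i : B} {v : V} (hv : v ∈ G.PhiPos) (hvi : v ≠ G.α i) :
    G.π (cs.simple i) v ∈ G.PhiPos := by
  obtain ⟨hvΦ, c, hc, hcv⟩ := G.mem_phiPos_iff.1 hv
  refine (G.mem_phiPos_or_neg_mem_phiPos (G.π_mem_phi hvΦ _)).resolve_right fun hneg => hvi ?_
  obtain ⟨d, hd, hdv⟩ := (G.mem_phiPos_iff.1 hneg).2
  have hsum : ∑ k, (c + d) k • G.α k = (2 * G.bil (G.α i) v) • G.α i := by
    simp only [Pi.add_apply, add_smul, Finset.sum_add_distrib, hcv, hdv, G.simple_refl]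
    abel
  have hc0 : ∀ k ≠ i, c k = 0 := fun k hk => by
    linarith [G.coeff_eq_zero_of_sum_eq_smul_alpha (fun k => add_nonneg (hc k) (hd k)) hsum hk,
      hc k, hd k, Pi.add_apply c d k]
  have hvi' : v = c i • G.α i := by
    rw [← hcv, Finset.sum_eq_single i (fun k _ hk => by simp [hc0 k hk]) (by simp)]
  rw [hvi'] at hvΦ ⊢
  exact G.eq_alpha_of_smul_mem_phi (hc i) hvΦ

theorem exists_bil_alpha_pos {v : V} (hv : v ∈ G.PhiPos) : ∃ k, 0 < G.bil (G.α k) v := by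
  obtain ⟨hvΦ, c, hc, hcv⟩ := G.mem_phiPos_iff.1 hv
  by_contra! h
  have h1 := G.bil_self_of_mem_phi hvΦ
  nth_rw 1 [← hcv] at h1
  simp only [map_sum, map_smul, LinearMap.sum_apply, LinearMap.smul_apply, smul_eq_mul] at h1
  have : ∑ k, c k * G.bil (G.α k) v ≤ 0 :=
    Finset.sum_nonpos fun k _ => mul_nonpos_of_nonneg_of_nonpos (hc k) (h k)
  linarith

abbrev rootPreorder : Preorder V where
  le u v := v - u ∈ G.posCone
  le_refl u := by simpa using G.zero_mem_posCone
  le_trans u v w huv hvw := by simpa using G.add_mem_posCone hvw huv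

theorem exists_alpha_mem {A : Set V} (hA : A ⊆ G.PhiPos) (hfin : A.Finite) (hne : A.Nonempty)
    (hcl : G.IsClosedSet (G.PhiPos \ A)) : ∃ i, G.α i ∈ A := by
  let := G.rootPreorder
  obtain ⟨β, hβA, hβmin⟩ := hfin.exists_minimal hne
  obtain ⟨k, hk⟩ := G.exists_bil_alpha_pos (hA hβA)
  by_contra! hno
  set γ := G.π (cs.simple k) β with hγ
  have hγβ : β - γ = (2 * G.bil (G.α k) β) • G.α k := by
    rw [hγ, G.simple_refl]
    abel
  have hγA : γ ∈ A := by
    by_contra hγA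
    have hγpos := G.π_simple_mem_phiPos (hA hβA) fun h => hno k (h ▸ hβA)
    refine (hcl _ ⟨G.alpha_mem_phiPos k, hno k⟩ _ ⟨hγpos, hγA⟩
      ⟨mem_coneOf_pair.2 ⟨2 * G.bil (G.α k) β, 1, by positivity, zero_le_one, ?_⟩,
        (G.mem_phiPos_iff.1 (hA hβA)).1⟩).2 hβA
    rw [one_smul, ← hγβ, sub_add_cancel]
  have hle : β - γ ∈ G.posCone := hγβ ▸ G.smul_mem_posCone (by positivity) (G.alpha_mem_posCone k)
  have hge : γ - β ∈ G.posCone := hβmin hγA hle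
  have h0 := G.eq_zero_of_mem_posCone_of_neg_mem hle (by rwa [neg_sub])
  rw [hγβ, smul_eq_zero] at h0
  exact h0.elim (by positivity) (G.ne_zero_of_mem_phi (G.alpha_mem_phi k))

theorem mem_phiPos_of_mem_coneOf_pair {a b v : V} (ha : a ∈ G.PhiPos) (hb : b ∈ G.PhiPos)
    (hv : v ∈ coneOf {a, b}) (hvΦ : v ∈ G.Phi) : v ∈ G.PhiPos := by
  obtain ⟨c, d, hc, hd, rfl⟩ := mem_coneOf_pair.1 hv
  exact G.mem_phiPos_iff.2 ⟨hvΦ, G.add_mem_posCone (G.smul_mem_posCone hc (G.mem_phiPos_iff.1 ha).2)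
    (G.smul_mem_posCone hd (G.mem_phiPos_iff.1 hb).2)⟩

theorem π_simple_mem_coneOf_pair {i : B} {a b v : V} (hv : v ∈ coneOf {a, b}) :
    G.π (cs.simple i) v ∈ coneOf {G.π (cs.simple i) a, G.π (cs.simple i) b} := by
  simpa only [Set.image_pair] using map_mem_coneOf (G.π (cs.simple i)) hv

theorem mem_image_π_simple_iff {i : B} {S : Set V} {v : V} :
    v ∈ G.π (cs.simple i) '' S ↔ G.π (cs.simple i) v ∈ S :=
  ⟨fun ⟨x, hx, hxv⟩ => hxv ▸ (G.π_simple_π_simple i x).symm ▸ hx,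
    fun h => ⟨_, h, G.π_simple_π_simple i v⟩⟩

theorem image_π_simple_diff_subset_phiPos {A : Set V} (hA : A ⊆ G.PhiPos) (i : B) :
    G.π (cs.simple i) '' (A \ {G.α i}) ⊆ G.PhiPos := by
  rintro _ ⟨v, ⟨hv, hvi⟩, rfl⟩
  exact G.π_simple_mem_phiPos (hA hv) hvi

theorem isClosedSet_image_π_simple_diff {A : Set V} (hA : A ⊆ G.PhiPos) (hcl : G.IsClosedSet A)
    (i : B) : G.IsClosedSet (G.π (cs.simple i) '' (A \ {G.α i})) := by
  intro a ha b hb γ ⟨hγ, hγΦ⟩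
  have hγpos := G.mem_phiPos_of_mem_coneOf_pair (G.image_π_simple_diff_subset_phiPos hA i ha)
    (G.image_π_simple_diff_subset_phiPos hA i hb) hγ hγΦ
  rw [G.mem_image_π_simple_iff] at ha hb ⊢
  refine ⟨hcl _ ha.1 _ hb.1 ⟨?_, G.π_mem_phi hγΦ _⟩, fun hi => ?_⟩
  · simpa only [G.π_simple_π_simple] using G.π_simple_mem_coneOf_pair (i := i) hγ
  · rw [Set.mem_singleton_iff] at hi
    apply G.neg_notMem_phiPos (G.alpha_mem_phiPos i)
    rwa [← G.π_simple_alpha, ← hi, G.π_simple_π_simple]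

theorem mem_insert_alpha_image_π_simple {C : Set V} (hC : C ⊆ G.PhiPos)
    (hcl : G.IsClosedSet (G.PhiPos \ C)) {i : B} (hi : G.α i ∉ C) {b γ : V}
    (hb : b ∈ insert (G.α i) (G.π (cs.simple i) '' C)) (hγ : γ ∈ coneOf {G.α i, b})
    (hγΦ : γ ∈ G.Phi) : γ ∈ insert (G.α i) (G.π (cs.simple i) '' C) := by
  obtain ⟨c, d, hc, hd, hγcd⟩ := mem_coneOf_pair.1 hγ
  rcases hb with rfl | ⟨x, hx, rfl⟩
  · rw [← add_smul] at hγcd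
    exact Or.inl (hγcd ▸ G.eq_alpha_of_smul_mem_phi (by positivity) (hγcd ▸ hγΦ))
  by_cases hγi : γ = G.α i
  · exact Or.inl hγi
  refine Or.inr (G.mem_image_π_simple_iff.2 (by_contra fun hσγ => ?_))
  have hxpos : G.π (cs.simple i) x ∈ G.PhiPos :=
    G.π_simple_mem_phiPos (hC hx) (ne_of_mem_of_not_mem hx hi)
  have hγpos := G.mem_phiPos_of_mem_coneOf_pair (G.alpha_mem_phiPos i) hxpos hγ hγΦ
  have hσγ' : G.π (cs.simple i) γ ∈ G.PhiPos \ C := ⟨G.π_simple_mem_phiPos hγpos hγi, hσγ⟩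
  rcases hd.eq_or_lt with rfl | hd
  · rw [zero_smul, add_zero] at hγcd
    exact hγi (hγcd ▸ G.eq_alpha_of_smul_mem_phi hc (hγcd ▸ hγΦ))
  -- `x = (sᵢ γ + c αᵢ) / d` lies in the cone over the roots `sᵢ γ, αᵢ` of `Φ⁺ \ C`
  have hx' : x = d⁻¹ • G.π (cs.simple i) γ + (c / d) • G.α i := by
    rw [hγcd, map_add, map_smul, map_smul, G.π_simple_alpha, G.π_simple_π_simple, smul_add,
      smul_smul, smul_smul, inv_mul_cancel₀ hd.ne', one_smul, smul_neg, div_eq_inv_mul]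
    abel
  refine (hcl _ hσγ' _ ⟨G.alpha_mem_phiPos i, hi⟩
    ⟨mem_coneOf_pair.2 ⟨_, _, by positivity, by positivity, hx'⟩,
      (G.mem_phiPos_iff.1 (hC hx)).1⟩).2 hx

theorem isClosedSet_insert_alpha_image_π_simple {C : Set V} (hC : C ⊆ G.PhiPos)
    (hbc : G.IsBiclosed C) {i : B} (hi : G.α i ∉ C) :
    G.IsClosedSet (insert (G.α i) (G.π (cs.simple i) '' C)) := by
  intro a ha b hb γ ⟨hγ, hγΦ⟩
  rcases ha with rfl | ha
  · exact G.mem_insert_alpha_image_π_simple hC hbc.2 hi hb hγ hγΦ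
  rcases hb with rfl | hb
  · rw [Set.pair_comm] at hγ
    exact G.mem_insert_alpha_image_π_simple hC hbc.2 hi (Or.inr ha) hγ hγΦ
  rw [G.mem_image_π_simple_iff] at ha hb
  refine Or.inr (G.mem_image_π_simple_iff.2 (hbc.1 _ ha _ hb ⟨?_, G.π_mem_phi hγΦ _⟩))
  exact G.π_simple_mem_coneOf_pair hγ

theorem phiPos_diff_image_π_simple_diff {A : Set V} (hA : A ⊆ G.PhiPos) {i : B} (hi : G.α i ∈ A) :
    G.PhiPos \ G.π (cs.simple i) '' (A \ {G.α i})
      = insert (G.α i) (G.π (cs.simple i) '' (G.PhiPos \ A)) := by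
  ext v
  simp only [Set.mem_sdiff, Set.mem_insert_iff, G.mem_image_π_simple_iff, Set.mem_singleton_iff]
  constructor
  · rintro ⟨hv, hσv⟩
    by_cases hvi : v = G.α i
    · exact Or.inl hvi
    refine Or.inr ⟨G.π_simple_mem_phiPos hv hvi, fun hσvA => hσv ⟨hσvA, fun h => ?_⟩⟩
    apply G.neg_notMem_phiPos (G.alpha_mem_phiPos i)
    rwa [← G.π_simple_alpha, ← h, G.π_simple_π_simple]
  · rintro (rfl | ⟨hσv, hσvA⟩)
    · refine ⟨G.alpha_mem_phiPos i, fun h => ?_⟩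
      rw [G.π_simple_alpha] at h
      exact G.neg_notMem_phiPos (G.alpha_mem_phiPos i) (hA h.1)
    · have hσvi : G.π (cs.simple i) v ≠ G.α i := fun h => hσvA (h ▸ hi)
      exact ⟨G.π_simple_π_simple i v ▸ G.π_simple_mem_phiPos hσv hσvi, fun h => hσvA h.1⟩

theorem isBiclosed_image_π_simple_diff {A : Set V} (hA : A ⊆ G.PhiPos) (hbc : G.IsBiclosed A)
    {i : B} (hi : G.α i ∈ A) : G.IsBiclosed (G.π (cs.simple i) '' (A \ {G.α i})) := by
  refine ⟨G.isClosedSet_image_π_simple_diff hA hbc.1 i, ?_⟩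
  rw [G.phiPos_diff_image_π_simple_diff hA hi]
  exact G.isClosedSet_insert_alpha_image_π_simple Set.sdiff_subset
    ⟨hbc.2, by rw [Set.sdiff_sdiff_cancel_left hA]; exact hbc.1⟩ fun h => h.2 hi

theorem mem_N_iff {w : W} {v : V} : v ∈ G.N w ↔ v ∈ G.PhiPos ∧ -G.π w⁻¹ v ∈ G.PhiPos := by
  constructor
  · rintro ⟨hv, x, hx, rfl⟩
    exact ⟨hv, by rwa [G.π_inv_π]⟩
  · rintro ⟨hv, hw⟩
    exact ⟨hv, G.π w⁻¹ v, hw, G.π_π_inv w v⟩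

theorem N_one : G.N 1 = ∅ :=
  Set.eq_empty_of_forall_notMem fun v hv => by
    rw [mem_N_iff, inv_one, G.π_one_apply] at hv
    exact G.neg_notMem_phiPos hv.1 hv.2

theorem N_simple_mul {u : W} {i : B} (hi : G.α i ∉ G.N u) :
    G.N (cs.simple i * u) = insert (G.α i) (G.π (cs.simple i) '' G.N u) := by
  have hui : G.π u⁻¹ (G.α i) ∈ G.PhiPos :=
    (G.mem_phiPos_or_neg_mem_phiPos (G.π_mem_phi (G.alpha_mem_phi i) _)).resolve_right
      fun h => hi (G.mem_N_iff.2 ⟨G.alpha_mem_phiPos i, h⟩)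
  ext v
  rw [Set.mem_insert_iff, G.mem_image_π_simple_iff, G.mem_N_iff, G.mem_N_iff, mul_inv_rev,
    cs.inv_simple, G.π_mul_apply]
  by_cases hvi : v = G.α i
  · subst hvi
    simpa [G.π_simple_alpha] using And.intro (G.alpha_mem_phiPos i) hui
  simp only [hvi, false_or]
  refine and_congr_left fun hneg => ⟨fun hv => G.π_simple_mem_phiPos hv hvi, fun hσv => ?_⟩
  have hσvi : G.π (cs.simple i) v ≠ G.α i := fun h =>
    hi (G.mem_N_iff.2 ⟨G.alpha_mem_phiPos i, by rwa [← h]⟩)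
  simpa only [G.π_simple_π_simple] using G.π_simple_mem_phiPos hσv hσvi

theorem alpha_notMem_image_π_simple_diff {A : Set V} (hA : A ⊆ G.PhiPos) (i : B) :
    G.α i ∉ G.π (cs.simple i) '' (A \ {G.α i}) := fun h => by
  rw [G.mem_image_π_simple_iff, G.π_simple_alpha] at h
  exact G.neg_notMem_phiPos (G.alpha_mem_phiPos i) (hA h.1)

theorem insert_alpha_image_π_simple_image_π_simple_diff {A : Set V} {i : B} (hi : G.α i ∈ A) :
    insert (G.α i) (G.π (cs.simple i) '' (G.π (cs.simple i) '' (A \ {G.α i}))) = A := by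
  rw [Set.image_image]
  simp only [G.π_simple_π_simple, Set.image_id', Set.insert_sdiff_singleton,
    Set.insert_eq_of_mem hi]

end GeomRep

/-- A finite biclosed subset of `Φ⁺` is an inversion set. -/
theorem stmt11 {B : Type*} [Fintype B] {W : Type*} [Group W]
    {M : CoxeterMatrix B} {cs : CoxeterSystem M W}
    {V : Type*} [AddCommGroup V] [Module ℝ V] (G : GeomRep M cs V)
    (A : Set V) (hA : A ⊆ G.PhiPos) (hfin : A.Finite) (hbc : G.IsBiclosed A) :
    ∃ w : W, A = G.N w := by
  induction hn : A.ncard generalizing A with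
  | zero => exact ⟨1, by rw [(Set.ncard_eq_zero hfin).1 hn, G.N_one]⟩
  | succ n ih =>
    obtain ⟨i, hi⟩ := G.exists_alpha_mem hA hfin (Set.nonempty_of_ncard_ne_zero (by omega)) hbc.2
    obtain ⟨u, hu⟩ := ih _ (G.image_π_simple_diff_subset_phiPos hA i) (hfin.sdiff.image _)
      (G.isBiclosed_image_π_simple_diff hA hbc hi) (by
        rw [Set.ncard_image_of_injective _ (G.π (cs.simple i)).injective,
          Set.ncard_sdiff_singleton_of_mem hi, hn, Nat.add_sub_cancel])
    refine ⟨cs.simple i * u, ?_⟩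
    rw [G.N_simple_mul (hu ▸ G.alpha_notMem_image_π_simple_diff hA i), ← hu,
      G.insert_alpha_image_π_simple_image_π_simple_diff hi]
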